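/- Let n be an odd positive integer and f, g ∈ ℤ[x]. If M_{Q_{4n}}(f, g) is even, then 16 divides M_{Q_{4n}}(f, g). -/

import Mathlib

open Polynomial Complex Finset

noncomputable def Mzn (n : ℕ) (F : Polynomial ℤ) : ℂ :=
  ∏ j ∈ Finset.range n, Polynomial.aeval (Complex.exp (2 * Real.pi * Complex.I * j / n)) F

noncomputable def MQ (n : ℕ) (f g : Polynomial ℤ) : ℂ :=
  ∏ j ∈ Finset.range (2 * n),
    (Polynomial.aeval (Complex.exp (2 * Real.pi * Complex.I * j / (2 * n))) f *
       Polynomial.aeval (Complex.exp (2 * Real.pi * Complex.I * j / (2 * n)))⁻¹ f -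
     Complex.exp (2 * Real.pi * Complex.I * j / (2 * n)) ^ n *
       Polynomial.aeval (Complex.exp (2 * Real.pi * Complex.I * j / (2 * n))) g *
       Polynomial.aeval (Complex.exp (2 * Real.pi * Complex.I * j / (2 * n)))⁻¹ g)

/-!
Let `n = 2K + 1`. The `2n`-th roots of unity are the `x` and the `-x` with `xⁿ = 1`, and
`f(z) f(z⁻¹) = q_f(z + z⁻¹)` for an integer polynomial `q_f`, so
`M = ∏_{xⁿ=1} Qe(x + x⁻¹) · ∏_{xⁿ=1} Qo(x + x⁻¹)` with `Qe = q_f - q_g`, `Qo = (q_f + q_g)(-X)`.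
In such a product `x = 1` gives `Q(2)` and the other factors pair off under `x ↦ x⁻¹`; one of
each pair multiplies to the resultant of `Q` with a monic integer polynomial whose roots are the
`x + x⁻¹`. So `M = (f(1)² - g(1)²)(f(-1)² + g(-1)²) r² s²` with integers `r ≡ s (mod 2)`, as
`Qe ≡ Qo (mod 2)`; with `f(1) ≡ f(-1)` and `g(1) ≡ g(-1) (mod 2)`, a parity count gives `16 ∣ M`.
-/

section AddInv

variable {R F : Type*} [CommRing R] [Field F] [Algebra R F]

lemma exists_aeval_add_inv_eq_add (p : R[X]) :
    ∃ q : R[X], ∀ z : F, z ≠ 0 → aeval (z + z⁻¹) q = aeval z p + aeval z⁻¹ p := by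
  induction p using Polynomial.induction_on' with
  | add p r hp hr =>
    obtain ⟨qp, hqp⟩ := hp
    obtain ⟨qr, hqr⟩ := hr
    exact ⟨qp + qr, fun z hz => by simp only [map_add, hqp z hz, hqr z hz]; ring⟩
  | monomial k c =>
    refine ⟨C c * dickson 1 1 k, fun z hz => ?_⟩
    have hd : aeval (z + z⁻¹) (dickson 1 (1 : R) k) = z ^ k + z⁻¹ ^ k := by
      rw [aeval_def, eval₂_eq_eval_map, map_dickson, map_one,
        dickson_one_one_eval_add_inv _ _ (mul_inv_cancel₀ hz)]
    simp only [map_mul, aeval_C, aeval_monomial, hd]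
    ring

lemma exists_aeval_add_inv_eq_mul (p : R[X]) :
    ∃ q : R[X], ∀ z : F, z ≠ 0 → aeval (z + z⁻¹) q = aeval z p * aeval z⁻¹ p := by
  induction p using Polynomial.recOnHorner with
  | M0 => exact ⟨0, fun z _ => by simp⟩
  | MC p a _ _ hp =>
    obtain ⟨q, hq⟩ := hp
    obtain ⟨s, hs⟩ := exists_aeval_add_inv_eq_add (F := F) p
    refine ⟨q + C a * s + C (a ^ 2), fun z hz => ?_⟩
    simp only [map_add, map_mul, aeval_C, hq z hz, hs z hz, map_pow]
    ring
  | MX p _ hp =>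
    obtain ⟨q, hq⟩ := hp
    refine ⟨q, fun z hz => ?_⟩
    simp only [map_mul, aeval_X, hq z hz]
    field_simp

end AddInv

lemma eq_or_mul_eq_one_of_add_inv_eq {F : Type*} [Field F] {a b : F} (ha : a ≠ 0) (hb : b ≠ 0)
    (h : a + a⁻¹ = b + b⁻¹) : a = b ∨ a * b = 1 := by
  have : (a - b) * (a * b - 1) = 0 := by
    field_simp at h
    linear_combination h
  rcases mul_eq_zero.1 this with h | h
  · exact Or.inl (sub_eq_zero.1 h)
  · exact Or.inr (sub_eq_zero.1 h)

lemma IsPrimitiveRoot.injOn_pow_add_inv {F : Type*} [Field F] {ω : F} {n : ℕ}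
    (hω : IsPrimitiveRoot ω n) :
    Set.InjOn (fun s : ℕ => ω ^ s + (ω ^ s)⁻¹) {s | 0 < s ∧ 2 * s ≤ n} := by
  intro s hs t ht hst
  simp only [Set.mem_ofPred_eq] at hs ht
  have hω0 : ω ≠ 0 := hω.ne_zero (by omega)
  rcases eq_or_mul_eq_one_of_add_inv_eq (pow_ne_zero s hω0) (pow_ne_zero t hω0) hst with h | h
  · exact hω.pow_inj (by omega) (by omega) h
  · rw [← pow_add] at h
    have := Nat.le_of_dvd (by omega) (hω.dvd_of_pow_eq_one _ h)
    omega

lemma prod_range_two_mul {M : Type*} [CommMonoid M] (n : ℕ) (φ : ℕ → M) :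
    ∏ j ∈ range (2 * n), φ j = (∏ t ∈ range n, φ (2 * t)) * ∏ t ∈ range n, φ (2 * t + 1) := by
  induction n with
  | zero => simp
  | succ n ih =>
    rw [Nat.mul_succ, prod_range_succ, prod_range_succ, ih, prod_range_succ, prod_range_succ,
      mul_mul_mul_comm, mul_assoc]

lemma prod_range_eq_mul_sq_of_symm {M : Type*} [CommMonoid M] (K : ℕ) (φ : ℕ → M)
    (hφ : ∀ s ≤ 2 * K + 1, φ (2 * K + 1 - s) = φ s) :
    ∏ s ∈ range (2 * K + 1), φ s = φ 0 * (∏ s ∈ range K, φ (s + 1)) ^ 2 := by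
  rw [prod_range_succ', two_mul, prod_range_add, mul_comm, sq]
  congr 2
  rw [← prod_range_reflect]
  refine prod_congr rfl fun s hs => ?_
  rw [mem_range] at hs
  rw [← hφ _ (by omega)]
  congr 1
  omega

lemma prod_nthRootsFinset_eq_prod_range {R M : Type*} [CommRing R] [IsDomain R] [CommMonoid M]
    {n : ℕ} (hn : 0 < n) {g : ℕ → R} (hg : ∀ t < n, g t ^ n = 1)
    (hinj : Set.InjOn g (range n)) (h : R → M) :
    ∏ x ∈ nthRootsFinset n (1 : R), h x = ∏ t ∈ range n, h (g t) := by
  classical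
  rw [← prod_image hinj]
  congr 1
  symm
  refine eq_of_subset_of_card_le (fun x hx => ?_) ?_
  · obtain ⟨t, ht, rfl⟩ := mem_image.1 hx
    exact (mem_nthRootsFinset hn 1).2 (hg t (mem_range.1 ht))
  · rw [card_image_of_injOn hinj, card_range, nthRootsFinset_def]
    exact (Multiset.toFinset_card_le _).trans (card_nthRoots n 1)

lemma dvd_resultant_sub_resultant {p : ℕ} (f : ℤ[X]) {g g' : ℤ[X]}
    (hg : g.map (Int.castRingHom (ZMod p)) = g'.map (Int.castRingHom (ZMod p))) (m n : ℕ) :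
    (p : ℤ) ∣ resultant f g m n - resultant f g' m n := by
  rw [← ZMod.intCast_zmod_eq_zero_iff_dvd, Int.cast_sub, sub_eq_zero,
    ← eq_intCast (Int.castRingHom _), ← eq_intCast (Int.castRingHom _), ← resultant_map_map,
    ← resultant_map_map, hg]

lemma sixteen_dvd_sq_sub_sq_mul_sq_add_sq {a b c d : ℤ} (hac : Even (a - c)) (hbd : Even (b - d))
    (h : Even ((a ^ 2 - b ^ 2) * (c ^ 2 + d ^ 2))) : 16 ∣ (a ^ 2 - b ^ 2) * (c ^ 2 + d ^ 2) := by
  simp only [Int.even_sub, Int.even_mul, Int.even_add, Int.even_pow, ne_eq, OfNat.ofNat_ne_zero,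
    not_false_eq_true, and_true] at hac hbd h
  rcases Int.even_or_odd a with ha | ha
  · obtain ⟨x, rfl⟩ := ha
    obtain ⟨y, rfl⟩ : Even b := by tauto
    obtain ⟨z, rfl⟩ : Even c := by tauto
    obtain ⟨w, rfl⟩ : Even d := by tauto
    exact ⟨(x ^ 2 - y ^ 2) * (z ^ 2 + w ^ 2), by ring⟩
  · have hodd : ∀ e : ℤ, (Even e ↔ Even a) → Odd e := fun e he =>
      Int.not_even_iff_odd.1 fun he' => Int.not_even_iff_odd.2 ha (he.1 he')
    obtain ⟨x, rfl⟩ := ha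
    obtain ⟨y, rfl⟩ := hodd b (by tauto)
    obtain ⟨z, rfl⟩ := hodd c (by tauto)
    obtain ⟨w, rfl⟩ := hodd d (by tauto)
    obtain ⟨k, hk⟩ := Int.even_mul_succ_self x
    obtain ⟨l, hl⟩ := Int.even_mul_succ_self y
    have hab : (2 * x + 1) ^ 2 - (2 * y + 1) ^ 2 = 8 * (k - l) := by
      linear_combination 4 * hk - 4 * hl
    exact ⟨(k - l) * (2 * z ^ 2 + 2 * z + 2 * w ^ 2 + 2 * w + 1), by rw [hab]; ring⟩

lemma sixteen_dvd_of_two_dvd {a b c d r s : ℤ} (hac : 2 ∣ a - c) (hbd : 2 ∣ b - d)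
    (hrs : 2 ∣ r - s) (h : 2 ∣ (a ^ 2 - b ^ 2) * (c ^ 2 + d ^ 2) * r ^ 2 * s ^ 2) :
    16 ∣ (a ^ 2 - b ^ 2) * (c ^ 2 + d ^ 2) * r ^ 2 * s ^ 2 := by
  rw [← even_iff_two_dvd] at hac hbd hrs h
  rcases Int.even_or_odd r with hr | hr
  · have hs : Even s := (Int.even_sub.1 hrs).1 hr
    obtain ⟨x, rfl⟩ := hr
    obtain ⟨y, rfl⟩ := hs
    exact ⟨(a ^ 2 - b ^ 2) * (c ^ 2 + d ^ 2) * x ^ 2 * y ^ 2, by ring⟩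
  · have hs : Odd s := Int.not_even_iff_odd.1 fun hs =>
      Int.not_even_iff_odd.2 hr ((Int.even_sub.1 hrs).2 hs)
    rw [mul_assoc, Int.even_mul] at h
    have hX := h.resolve_right (Int.not_even_iff_odd.2 (hr.pow.mul hs.pow))
    exact ((sixteen_dvd_sq_sub_sq_mul_sq_add_sq hac hbd hX).mul_right _).mul_right _

/-- `geomTrace K` takes the value `z⁻ᴷ (1 + z + ⋯ + z²ᴷ)` at `z + z⁻¹`. -/
noncomputable def geomTrace : ℕ → ℤ[X]
  | 0 => 1
  | 1 => X + 1
  | K + 2 => X * geomTrace (K + 1) - geomTrace K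

lemma geomTrace_monic_natDegree (K : ℕ) :
    (geomTrace K).Monic ∧ (geomTrace K).natDegree = K := by
  induction K using Nat.twoStepInduction with
  | zero => exact ⟨monic_one, natDegree_one⟩
  | one => exact ⟨monic_X_add_C 1, natDegree_X_add_C 1⟩
  | more K ih0 ih1 =>
    have hd : (X * geomTrace (K + 1)).natDegree = K + 2 := by
      rw [monic_X.natDegree_mul ih1.1, natDegree_X, ih1.2]; ring
    have hlt : (geomTrace K).natDegree < (X * geomTrace (K + 1)).natDegree := by
      rw [hd, ih0.2]; omega
    refine ⟨(monic_X.mul ih1.1).sub_of_left (degree_lt_degree hlt), ?_⟩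
    rw [geomTrace, natDegree_sub_eq_left_of_natDegree_lt hlt, hd]

section GeomTrace

variable {F : Type*} [Field F]

lemma sub_one_mul_pow_mul_aeval_geomTrace (K : ℕ) {z : F} (hz : z ≠ 0) :
    (z - 1) * z ^ K * aeval (z + z⁻¹) (geomTrace K) = z ^ (2 * K + 1) - 1 := by
  induction K using Nat.twoStepInduction with
  | zero => simp [geomTrace]
  | one => simp [geomTrace]; field_simp; ring
  | more K h0 h1 =>
    simp only [geomTrace, map_sub, map_mul, aeval_X]
    linear_combination
      (z + z⁻¹) * z * h1 - z ^ 2 * h0 + (z ^ (2 * K + 3) - 1) * mul_inv_cancel₀ hz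

lemma aeval_geomTrace_eq_zero (K : ℕ) {z : F} (hz : z ^ (2 * K + 1) = 1) (hz1 : z ≠ 1) :
    aeval (z + z⁻¹) (geomTrace K) = 0 := by
  have hz0 : z ≠ 0 := by rintro rfl; simp at hz
  have h := sub_one_mul_pow_mul_aeval_geomTrace K hz0
  rw [hz, sub_self] at h
  simpa [sub_eq_zero, hz1, hz0] using h

variable [IsAlgClosed F]

lemma cast_resultant_geomTrace {K N : ℕ} {ω : F} (hω : IsPrimitiveRoot ω (2 * K + 1))
    {Q : ℤ[X]} (hN : Q.natDegree ≤ N) :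
    ((resultant (geomTrace K) Q K N : ℤ) : F)
      = ∏ s ∈ range K, aeval (ω ^ (s + 1) + (ω ^ (s + 1))⁻¹) Q := by
  classical
  obtain ⟨hmon, hdeg⟩ := geomTrace_monic_natDegree K
  set W := (geomTrace K).map (algebraMap ℤ F)
  set y : ℕ → F := fun s => ω ^ (s + 1) + (ω ^ (s + 1))⁻¹
  have hWdeg : W.natDegree = K := by rw [hmon.natDegree_map, hdeg]
  have hinj : Set.InjOn y (range K) :=
    hω.injOn_pow_add_inv.comp Nat.succ_injective.injOn fun s hs => by
      simp only [coe_range, Set.mem_Iio] at hs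
      simp only [Set.mem_ofPred_eq]
      omega
  have hroots : W.roots = ((range K).image y).val := by
    refine roots_eq_of_natDegree_le_card_of_ne_zero (fun x hx => ?_) ?_ (hmon.map _).ne_zero
    · obtain ⟨s, hs, rfl⟩ := mem_image.1 hx
      rw [mem_range] at hs
      rw [eval_map_algebraMap]
      refine aeval_geomTrace_eq_zero K ?_ (hω.pow_ne_one_of_pos_of_lt (by omega) (by omega))
      rw [← pow_mul, mul_comm, pow_mul, hω.pow_eq_one, one_pow]
    · rw [hWdeg, card_image_of_injOn hinj, card_range]
  calc ((resultant (geomTrace K) Q K N : ℤ) : F)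
      = resultant W (Q.map (algebraMap ℤ F)) W.natDegree N := by
        rw [hWdeg, resultant_map_map, algebraMap_int_eq, eq_intCast]
    _ = (W.roots.map (Q.map (algebraMap ℤ F)).eval).prod := by
        rw [resultant_eq_prod_eval _ _ _ (natDegree_map_le.trans hN) (IsAlgClosed.splits _),
          (hmon.map _).leadingCoeff, one_pow, one_mul]
    _ = ∏ s ∈ range K, aeval (y s) Q := by
        rw [hroots, ← prod_eq_multiset_prod, prod_image hinj]
        simp only [eval_map_algebraMap]

end GeomTrace

lemma prod_nthRootsFinset_aeval_add_inv (K : ℕ) {N : ℕ} {Q : ℤ[X]} (hN : Q.natDegree ≤ N) :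
    ∏ x ∈ nthRootsFinset (2 * K + 1) (1 : ℂ), aeval (x + x⁻¹) Q
      = aeval 2 Q * ((resultant (geomTrace K) Q K N : ℤ) : ℂ) ^ 2 := by
  have hω := Complex.isPrimitiveRoot_exp (2 * K + 1) (by omega)
  set ω := Complex.exp (2 * Real.pi * Complex.I / ↑(2 * K + 1))
  have hsymm : ∀ s ≤ 2 * K + 1, ω ^ (2 * K + 1 - s) = (ω ^ s)⁻¹ := fun s hs =>
    eq_inv_of_mul_eq_one_left (by rw [← pow_add, Nat.sub_add_cancel hs, hω.pow_eq_one])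
  rw [prod_nthRootsFinset_eq_prod_range (by omega)
      (fun t _ => by rw [← pow_mul, mul_comm, pow_mul, hω.pow_eq_one, one_pow]) hω.injOn_pow,
    prod_range_eq_mul_sq_of_symm K _ fun s hs => by rw [hsymm s hs, inv_inv, add_comm],
    cast_resultant_geomTrace hω hN, pow_zero, inv_one, one_add_one_eq_two]

lemma aeval_two_of_aeval_add_inv {p q : ℤ[X]}
    (hq : ∀ z : ℂ, z ≠ 0 → aeval (z + z⁻¹) q = aeval z p * aeval z⁻¹ p) :
    aeval 2 q = ((p.eval 1 ^ 2 : ℤ) : ℂ) ∧ aeval (-2) q = ((p.eval (-1) ^ 2 : ℤ) : ℂ) := by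
  have hcast : ∀ r : ℤ, aeval (r : ℂ) p = ((p.eval r : ℤ) : ℂ) := fun r => by
    simpa using aeval_algebraMap_apply_eq_algebraMap_eval (A := ℂ) r p
  have h1 := hq 1 one_ne_zero
  have h2 := hq (-1) (by norm_num)
  have c1 := hcast 1
  have c2 := hcast (-1)
  push_cast at h1 h2 c1 c2 ⊢
  norm_num at h1 h2
  rw [h1, h2, c1, c2]
  constructor <;> ring

lemma MQ_eq_prod_nthRootsFinset (K : ℕ) {f g qf qg : ℤ[X]}
    (hqf : ∀ z : ℂ, z ≠ 0 → aeval (z + z⁻¹) qf = aeval z f * aeval z⁻¹ f)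
    (hqg : ∀ z : ℂ, z ≠ 0 → aeval (z + z⁻¹) qg = aeval z g * aeval z⁻¹ g) :
    MQ (2 * K + 1) f g = (∏ x ∈ nthRootsFinset (2 * K + 1) (1 : ℂ), aeval (x + x⁻¹) (qf - qg)) *
      ∏ x ∈ nthRootsFinset (2 * K + 1) (1 : ℂ), aeval (x + x⁻¹) ((qf + qg).comp (-X)) := by
  set n := 2 * K + 1 with hn
  have hζ := Complex.isPrimitiveRoot_exp (2 * n) (by omega)
  set ζ := Complex.exp (2 * Real.pi * Complex.I / ↑(2 * n))
  have hζ0 : ζ ≠ 0 := hζ.ne_zero (by omega)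
  have hζn : ζ ^ n = -1 := (hζ.pow (by omega) (mul_comm 2 n)).eq_neg_one_of_two_right
  have hω : IsPrimitiveRoot (ζ ^ 2) n := hζ.pow (by omega) rfl
  have hexp : ∀ j : ℕ, Complex.exp (2 * Real.pi * Complex.I * j / (2 * n)) = ζ ^ j := fun j => by
    rw [← Complex.exp_nat_mul]
    push_cast
    ring_nf
  have hfactor : ∀ z : ℂ, z ≠ 0 → aeval z f * aeval z⁻¹ f - z ^ n * aeval z g * aeval z⁻¹ g
      = aeval (z + z⁻¹) qf - z ^ n * aeval (z + z⁻¹) qg := fun z hz => by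
    rw [hqf z hz, hqg z hz]; ring
  unfold MQ
  simp only [hexp]
  rw [prod_range_two_mul]
  congr 1
  · rw [prod_nthRootsFinset_eq_prod_range (by omega) (g := ((ζ ^ 2) ^ ·))
      (fun t _ => by rw [← pow_mul, mul_comm, pow_mul, hω.pow_eq_one, one_pow]) hω.injOn_pow]
    refine prod_congr rfl fun t _ => ?_
    have hpow : (ζ ^ (2 * t)) ^ n = 1 := by
      rw [← pow_mul, show 2 * t * n = 2 * n * t by ring, pow_mul, hζ.pow_eq_one, one_pow]
    rw [← pow_mul ζ 2 t, hfactor _ (pow_ne_zero _ hζ0), hpow, one_mul, map_sub]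
  · have hpow : ∀ t : ℕ, (ζ ^ (2 * t + 1)) ^ n = -1 := fun t => by
      rw [← pow_mul, show (2 * t + 1) * n = n * (2 * t + 1) by ring, pow_mul, hζn,
        Odd.neg_one_pow ⟨t, rfl⟩]
    have hg : ∀ t : ℕ, (ζ ^ 2) ^ t * -ζ = -ζ ^ (2 * t + 1) := fun t => by ring
    rw [prod_nthRootsFinset_eq_prod_range (by omega) (g := fun t => (ζ ^ 2) ^ t * -ζ)
      (fun t _ => by rw [hg, neg_pow, hpow, Odd.neg_one_pow ⟨K, hn⟩]; ring)
      (hω.injOn_pow_mul (neg_ne_zero.2 hζ0))]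
    refine prod_congr rfl fun t _ => ?_
    rw [hg, hfactor _ (pow_ne_zero _ hζ0), hpow, aeval_comp, map_neg, aeval_X, inv_neg, ← neg_add,
      neg_neg, map_add]
    ring

lemma exists_MQ_eq (K : ℕ) (f g : ℤ[X]) : ∃ r s : ℤ, 2 ∣ r - s ∧
    MQ (2 * K + 1) f g = (((f.eval 1 ^ 2 - g.eval 1 ^ 2) * (f.eval (-1) ^ 2 + g.eval (-1) ^ 2)
      * r ^ 2 * s ^ 2 : ℤ) : ℂ) := by
  obtain ⟨qf, hqf⟩ := exists_aeval_add_inv_eq_mul (F := ℂ) f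
  obtain ⟨qg, hqg⟩ := exists_aeval_add_inv_eq_mul (F := ℂ) g
  set Qe := qf - qg
  set Qo := (qf + qg).comp (-X)
  set N := max Qe.natDegree Qo.natDegree
  have hQ : Qe.map (Int.castRingHom (ZMod 2)) = Qo.map (Int.castRingHom (ZMod 2)) := by
    rw [Polynomial.map_sub, Polynomial.map_comp, Polynomial.map_add, Polynomial.map_neg, map_X,
      CharTwo.neg_eq, comp_X, CharTwo.sub_eq_add]
  refine ⟨resultant (geomTrace K) Qe K N, resultant (geomTrace K) Qo K N,
    dvd_resultant_sub_resultant _ hQ _ _, ?_⟩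
  rw [MQ_eq_prod_nthRootsFinset K hqf hqg, prod_nthRootsFinset_aeval_add_inv K (le_max_left _ _),
    prod_nthRootsFinset_aeval_add_inv K (le_max_right _ _), map_sub, aeval_comp, map_neg, aeval_X,
    map_add, (aeval_two_of_aeval_add_inv hqf).1, (aeval_two_of_aeval_add_inv hqf).2,
    (aeval_two_of_aeval_add_inv hqg).1, (aeval_two_of_aeval_add_inv hqg).2]
  push_cast
  ring

theorem stmt11_general (n : ℕ) (hodd : Odd n)
    (f g : Polynomial ℤ) (M : ℤ) (hM : (M : ℂ) = MQ n f g)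
    (h : 2 ∣ M) : 16 ∣ M := by
  obtain ⟨K, rfl⟩ := hodd
  obtain ⟨r, s, hrs, hMQ⟩ := exists_MQ_eq K f g
  have heval : ∀ p : ℤ[X], 2 ∣ p.eval 1 - p.eval (-1) := fun p => by
    simpa using sub_dvd_eval_sub 1 (-1) p
  obtain rfl : M = _ := by exact_mod_cast hM.trans hMQ
  exact sixteen_dvd_of_two_dvd (heval f) (heval g) hrs h

theorem stmt11 (n : ℕ) (hn : 0 < n) (hodd : Odd n)
    (f g : Polynomial ℤ) (M : ℤ) (hM : (M : ℂ) = MQ n f g)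
    (h : 2 ∣ M) : 16 ∣ M :=
  stmt11_general n hodd f g M hM h
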